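/- arXiv:1910.10774 — 2 statements merged into one kernel-verified Lean document; each statement's English description precedes it below -/
import Mathlib

section
/- Let X be a real Banach space and (a_n)_{n<ω} a normalized sequence in X. Suppose that every sequence (b_m)_{m<ω} of normalized blocks of (a_n) is isometrically equivalent to (a_n), i.e., for every such (b_m), every k < ω, and every c ∈ ℝ^k, ‖Σ_{m<k} c_m b_m‖ = ‖Σ_{m<k} c_m a_m‖. Then either there exists p with 1 ≤ p < ∞ such that (a_n) is isometric to the standard basis of ℓ_p, or (a_n) is isometric to the standard basis of c_0. -/
/-!
Block isometry makes `(a n)` 1-unconditional (sign changes) and 1-spreading (subsequences), so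
`‖∑ r i • a i‖` is monotone in each `|r i|`, and `λ n := ‖∑_{i<n} a i‖` is monotone.
Normalizing and concatenating blocks of lengths `l i` gives `‖∑ λ (l i) • a i‖ = λ (∑ l i)`, in
particular `λ (m * n) = λ m * λ n`. Comparing `n ^ j` with powers of two shows that such a `λ`
is `n ↦ n ^ c`, and `λ 2 ≤ 2` forces `0 ≤ c ≤ 1`. If `c = 0`, monotonicity squeezes
`‖∑ r i • a i‖` between `|r j|` and `max |r i| * λ k = max |r i|`. If `c > 0`, the identity
`‖∑ (l i) ^ c • a i‖ = (∑ l i) ^ c` extends by homogeneity and continuity to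
`‖∑ x i ^ c • a i‖ = (∑ x i) ^ c` for all `x ≥ 0`, which is the `ℓ_{1/c}` norm.
-/

open Finset

/-- `b` is a normalized block of the sequence `a`: `b = ∑_{i<k} r i • a (n+i)` with `‖b‖ = 1`. -/
def IsNormalizedBlock {X : Type*} [NormedAddCommGroup X] [NormedSpace ℝ X]
    (a : ℕ → X) (b : X) : Prop :=
  ∃ (n k : ℕ) (r : ℕ → ℝ),
    b = ∑ i ∈ Finset.range k, r i • a (n + i) ∧ ‖b‖ = 1

/-- `b` is a sequence of normalized blocks of `a` with successive index ranges. -/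
def IsNormalizedBlockSeq {X : Type*} [NormedAddCommGroup X] [NormedSpace ℝ X]
    (a b : ℕ → X) : Prop :=
  ∃ (n k : ℕ → ℕ) (r : ℕ → ℕ → ℝ),
    (∀ m, b m = ∑ i ∈ Finset.range (k m), r m i • a (n m + i)) ∧
    (∀ m, ‖b m‖ = 1) ∧
    (∀ m, n m + k m ≤ n (m + 1))

/-- `a` is isometric (1-equivalent) to the standard basis of `ℓ_p`. -/
def IsometricLpBasis {X : Type*} [NormedAddCommGroup X] [NormedSpace ℝ X]
    (p : ℝ) (a : ℕ → X) : Prop :=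
  ∀ (k : ℕ) (r : ℕ → ℝ),
    ‖∑ i ∈ Finset.range k, r i • a i‖ =
      (∑ i ∈ Finset.range k, |r i| ^ p) ^ (1 / p)

/-- `a` is isometric (1-equivalent) to the standard basis of `c₀`. -/
def IsometricC0Basis {X : Type*} [NormedAddCommGroup X] [NormedSpace ℝ X]
    (a : ℕ → X) : Prop :=
  ∀ (k : ℕ) (hk : k ≠ 0) (r : ℕ → ℝ),
    ‖∑ i ∈ Finset.range k, r i • a i‖ =
      (Finset.range k).sup' (Finset.nonempty_range_iff.mpr hk) (fun i => |r i|)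

open Filter Topology Function

theorem Finset.sum_range_sum_consecutive {M : Type*} [AddCommMonoid M] (g : ℕ → M)
    (m : ℕ → ℕ) (k : ℕ) :
    ∑ i ∈ range k, ∑ t ∈ range (m i), g (∑ s ∈ range i, m s + t) =
      ∑ j ∈ range (∑ i ∈ range k, m i), g j := by
  induction k with
  | zero => simp
  | succ k ih => rw [sum_range_succ, ih, sum_range_succ m, sum_range_add]

theorem tendsto_natCast_floor_mul_add_one_div {x : ℝ} (hx : 0 ≤ x) :
    Tendsto (fun N : ℕ => ((⌊x * N⌋₊ + 1 : ℕ) : ℝ) / N) atTop (𝓝 x) := by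
  have hfloor := (tendsto_nat_floor_mul_div_atTop hx).comp (tendsto_natCast_atTop_atTop (R := ℝ))
  simpa [add_div] using hfloor.add (tendsto_one_div_atTop_nhds_zero_nat (𝕜 := ℝ))

theorem le_of_forall_pow_le_mul_pow {x y C : ℝ} (hy : 0 < y) (h : ∀ j : ℕ, x ^ j ≤ C * y ^ j) :
    x ≤ y := by
  by_contra! hyx
  obtain ⟨j, hj⟩ :=
    ((tendsto_pow_atTop_atTop_of_one_lt ((one_lt_div hy).2 hyx)).eventually_gt_atTop C).exists
  rw [div_pow, lt_div_iff₀ (pow_pos hy j)] at hj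
  linarith [h j]

/-- `S + t • v` is a convex combination of `S + s • v` and `S - s • v`. -/
theorem norm_add_smul_le_of_abs_le {X : Type*} [NormedAddCommGroup X] [NormedSpace ℝ X]
    {S v : X} {s t : ℝ} (hts : |t| ≤ |s|) (hs : ‖S - s • v‖ = ‖S + s • v‖) :
    ‖S + t • v‖ ≤ ‖S + s • v‖ := by
  rcases eq_or_ne s 0 with rfl | hs0
  · rw [abs_zero, abs_nonpos_iff] at hts
    rw [hts]
  set θ := t / s
  obtain ⟨hθl, hθr⟩ := abs_le.1 (show |θ| ≤ 1 by
    rw [abs_div]; exact div_le_one_of_le₀ hts (abs_nonneg _))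
  have hconv : S + t • v = ((1 + θ) / 2) • (S + s • v) + ((1 - θ) / 2) • (S - s • v) := by
    rw [show t = θ * s from (div_mul_cancel₀ t hs0).symm]
    module
  calc ‖S + t • v‖
      ≤ ((1 + θ) / 2) * ‖S + s • v‖ + ((1 - θ) / 2) * ‖S - s • v‖ := by
        rw [hconv]
        refine (norm_add_le _ _).trans_eq ?_
        rw [norm_smul, norm_smul, Real.norm_of_nonneg (by linarith),
          Real.norm_of_nonneg (by linarith)]
    _ = ‖S + s • v‖ := by rw [hs]; ring

noncomputable def natCastRpowHom (c : ℝ) : ℕ →* ℝ where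
  toFun n := (n : ℝ) ^ c
  map_one' := by simp
  map_mul' m n := by
    push_cast
    exact Real.mul_rpow (Nat.cast_nonneg m) (Nat.cast_nonneg n)

theorem natCastRpowHom_apply (c : ℝ) (n : ℕ) : natCastRpowHom c n = (n : ℝ) ^ c := rfl

theorem monotone_natCastRpowHom {c : ℝ} (hc : 0 ≤ c) : Monotone (natCastRpowHom c) :=
  fun _ _ hmn => Real.rpow_le_rpow (Nat.cast_nonneg _) (Nat.cast_le.2 hmn) hc

namespace MonoidHom

theorem one_le_of_monotone (f : ℕ →* ℝ) (hf : Monotone f) {n : ℕ} (hn : n ≠ 0) : 1 ≤ f n :=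
  (map_one f).symm.trans_le (hf (Nat.one_le_iff_ne_zero.2 hn))

/-- Comparing `n ^ j` with the powers of two between which it lies. -/
theorem le_of_monotone_of_map_two_eq (f g : ℕ →* ℝ) (hf : Monotone f) (hg : Monotone g)
    (h2 : f 2 = g 2) {n : ℕ} (hn : n ≠ 0) : f n ≤ g n := by
  refine le_of_forall_pow_le_mul_pow (C := g 2)
    (zero_lt_one.trans_le (g.one_le_of_monotone hg hn)) fun j => ?_
  set i := Nat.log 2 (n ^ j)
  calc f n ^ j = f (n ^ j) := (map_pow f n j).symm
    _ ≤ f (2 ^ (i + 1)) := hf (Nat.lt_pow_succ_log_self one_lt_two _).le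
    _ = g 2 * g (2 ^ i) := by rw [map_pow, map_pow, h2, pow_succ, mul_comm]
    _ ≤ g 2 * g (n ^ j) := by
        gcongr
        · exact zero_le_one.trans (g.one_le_of_monotone hg two_ne_zero)
        · exact hg (Nat.pow_log_le_self 2 (pow_ne_zero j hn))
    _ = g 2 * g n ^ j := by rw [map_pow]

theorem exists_eq_rpow_of_monotone (f : ℕ →* ℝ) (hf : Monotone f) :
    ∃ c : ℝ, 0 ≤ c ∧ ∀ n, n ≠ 0 → f n = (n : ℝ) ^ c := by
  have hf2 : 1 ≤ f 2 := f.one_le_of_monotone hf two_ne_zero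
  have hc : 0 ≤ Real.log (f 2) / Real.log 2 :=
    div_nonneg (Real.log_nonneg hf2) (Real.log_nonneg one_le_two)
  have h2 : f 2 = natCastRpowHom (Real.log (f 2) / Real.log 2) 2 := by
    rw [natCastRpowHom_apply, Nat.cast_ofNat, Real.rpow_def_of_pos two_pos,
      mul_div_cancel₀ _ (Real.log_pos one_lt_two).ne', Real.exp_log (by linarith)]
  refine ⟨_, hc, fun n hn => le_antisymm ?_ ?_⟩
  · exact f.le_of_monotone_of_map_two_eq _ hf (monotone_natCastRpowHom hc) h2 hn
  · exact le_of_monotone_of_map_two_eq _ f (monotone_natCastRpowHom hc) hf h2.symm hn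

end MonoidHom

section BlockIsometric

variable {X : Type*} [NormedAddCommGroup X] [NormedSpace ℝ X] {a : ℕ → X}

def IsBlockIsometric (a : ℕ → X) : Prop :=
  ∀ b : ℕ → X, IsNormalizedBlockSeq a b →
    ∀ (k : ℕ) (c : ℕ → ℝ), ‖∑ m ∈ range k, c m • b m‖ = ‖∑ m ∈ range k, c m • a m‖

namespace IsBlockIsometric

theorem norm_sum_smul_subseq (h : IsBlockIsometric a) (ha : ∀ n, ‖a n‖ = 1) {n : ℕ → ℕ}
    (hn : StrictMono n) {ε : ℕ → ℝ} (hε : ∀ m, |ε m| = 1) (K : ℕ) (c : ℕ → ℝ) :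
    ‖∑ m ∈ range K, (c m * ε m) • a (n m)‖ = ‖∑ m ∈ range K, c m • a m‖ := by
  have hb : IsNormalizedBlockSeq a fun m => ε m • a (n m) :=
    ⟨n, fun _ => 1, fun m _ => ε m, fun m => by simp, fun m => by simp [norm_smul, hε, ha],
      fun m => Nat.succ_le_of_lt (hn (Nat.lt_succ_self m))⟩
  simpa only [mul_smul] using h _ hb K c

theorem norm_sum_mul_sign_smul (h : IsBlockIsometric a) (ha : ∀ n, ‖a n‖ = 1) {ε : ℕ → ℝ}
    (hε : ∀ m, |ε m| = 1) (K : ℕ) (c : ℕ → ℝ) :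
    ‖∑ m ∈ range K, (c m * ε m) • a m‖ = ‖∑ m ∈ range K, c m • a m‖ :=
  h.norm_sum_smul_subseq ha strictMono_id hε K c

theorem norm_sum_abs_smul (h : IsBlockIsometric a) (ha : ∀ n, ‖a n‖ = 1) (K : ℕ)
    (r : ℕ → ℝ) : ‖∑ i ∈ range K, |r i| • a i‖ = ‖∑ i ∈ range K, r i • a i‖ := by
  have hε : ∀ i, |(if r i < 0 then -1 else 1 : ℝ)| = 1 := fun i => by split_ifs <;> simp
  rw [← h.norm_sum_mul_sign_smul ha hε K r]
  congr 1
  refine sum_congr rfl fun i _ => ?_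
  split_ifs with hr
  · rw [abs_of_neg hr, mul_neg_one]
  · rw [abs_of_nonneg (not_lt.1 hr), mul_one]

theorem norm_sum_range_shift (h : IsBlockIsometric a) (ha : ∀ n, ‖a n‖ = 1) (t K : ℕ) :
    ‖∑ i ∈ range K, a (t + i)‖ = ‖∑ i ∈ range K, a i‖ := by
  simpa using h.norm_sum_smul_subseq ha (strictMono_id.const_add t) (ε := 1) (by simp) K 1

theorem norm_sum_update_smul_le (h : IsBlockIsometric a) (ha : ∀ n, ‖a n‖ = 1) {K j : ℕ}
    (hj : j < K) (u : ℕ → ℝ) {t : ℝ} (ht : |t| ≤ |u j|) :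
    ‖∑ i ∈ range K, update u j t i • a i‖ ≤ ‖∑ i ∈ range K, u i • a i‖ := by
  set S := ∑ i ∈ (range K).erase j, u i • a i
  have hsplit : ∀ v : ℕ → ℝ, (∀ i, i ≠ j → v i = u i) →
      ∑ i ∈ range K, v i • a i = S + v j • a j := fun v hv => by
    rw [← sum_erase_add _ _ (mem_range.2 hj)]
    congr 1
    exact sum_congr rfl fun i hi => by rw [hv i (ne_of_mem_erase hi)]
  have hε : ∀ i, |update (1 : ℕ → ℝ) j (-1) i| = 1 := fun i => by
    rcases eq_or_ne i j with rfl | hij <;> simp [update_of_ne, *]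
  have hflip := h.norm_sum_mul_sign_smul ha hε K u
  rw [hsplit _ fun i hi => by simp [update_of_ne hi], hsplit u fun _ _ => rfl, update_self,
    mul_neg_one, neg_smul, ← sub_eq_add_neg] at hflip
  rw [hsplit _ fun i hi => update_of_ne hi _ _, update_self, hsplit u fun _ _ => rfl]
  exact norm_add_smul_le_of_abs_le ht hflip

theorem norm_sum_smul_le_of_abs_le (h : IsBlockIsometric a) (ha : ∀ n, ‖a n‖ = 1) {K : ℕ}
    {c d : ℕ → ℝ} (hcd : ∀ i < K, |c i| ≤ |d i|) :
    ‖∑ i ∈ range K, c i • a i‖ ≤ ‖∑ i ∈ range K, d i • a i‖ := by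
  let g (j i : ℕ) : ℝ := if i < j then c i else d i
  have hg : ∀ j ≤ K, ‖∑ i ∈ range K, g j i • a i‖ ≤ ‖∑ i ∈ range K, d i • a i‖ := by
    intro j hj
    induction j with
    | zero => simp [g]
    | succ j ih =>
      have hupdate : g (j + 1) = update (g j) j (c j) := by
        funext i
        rcases eq_or_ne i j with rfl | hij
        · simp [g]
        · simp [g, hij, Nat.le_iff_lt_or_eq]
      rw [hupdate]
      refine (h.norm_sum_update_smul_le ha (by omega) _ ?_).trans (ih (by omega))
      simpa [g] using hcd j (by omega)
  calc ‖∑ i ∈ range K, c i • a i‖ = ‖∑ i ∈ range K, g K i • a i‖ := by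
        congr 1
        exact sum_congr rfl fun i hi => by simp [g, mem_range.1 hi]
    _ ≤ _ := hg K le_rfl

theorem abs_le_norm_sum_smul (h : IsBlockIsometric a) (ha : ∀ n, ‖a n‖ = 1) {K j : ℕ}
    (hj : j < K) (r : ℕ → ℝ) : |r j| ≤ ‖∑ i ∈ range K, r i • a i‖ := by
  have hle := h.norm_sum_smul_le_of_abs_le ha (K := K) (d := r)
    (c := fun i => if i = j then r j else 0) fun i _ => by split_ifs with hij <;> simp [hij]
  simpa [ite_smul, sum_ite_eq', mem_range.2 hj, norm_smul, ha] using hle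

theorem one_le_norm_sum_range (h : IsBlockIsometric a) (ha : ∀ n, ‖a n‖ = 1) {n : ℕ}
    (hn : n ≠ 0) : 1 ≤ ‖∑ i ∈ range n, a i‖ := by
  simpa using h.abs_le_norm_sum_smul ha (Nat.pos_of_ne_zero hn) 1

theorem monotone_norm_sum_range (h : IsBlockIsometric a) (ha : ∀ n, ‖a n‖ = 1) :
    Monotone fun n => ‖∑ i ∈ range n, a i‖ := by
  intro m n hmn
  have hle := h.norm_sum_smul_le_of_abs_le ha (K := n) (c := fun i => if i < m then 1 else 0)
    (d := 1) fun i _ => by split_ifs <;> simp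
  have hsum : ∑ i ∈ range n, (if i < m then (1 : ℝ) else 0) • a i = ∑ i ∈ range m, a i := by
    rw [← sum_subset (range_subset_range.2 hmn) fun i _ hi => by simp_all]
    exact sum_congr rfl fun i hi => by simp [mem_range.1 hi]
  rw [hsum] at hle
  simpa using hle

/-- Apply block isometry to the consecutive normalized blocks
`∑_{t < l i} a (l 0 + ⋯ + l (i-1) + t) / ‖∑_{t < l i} a t‖`. -/
theorem norm_sum_norm_sum_range_smul (h : IsBlockIsometric a) (ha : ∀ n, ‖a n‖ = 1) (k : ℕ)
    {l : ℕ → ℕ} (hl : ∀ i, l i ≠ 0) :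
    ‖∑ i ∈ range k, ‖∑ t ∈ range (l i), a t‖ • a i‖ =
      ‖∑ j ∈ range (∑ i ∈ range k, l i), a j‖ := by
  set L : ℕ → ℝ := fun i => ‖∑ t ∈ range (l i), a t‖
  have hL : ∀ i, 0 < L i := fun i => zero_lt_one.trans_le (h.one_le_norm_sum_range ha (hl i))
  set N : ℕ → ℕ := fun i => ∑ s ∈ range i, l s
  have hb : IsNormalizedBlockSeq a fun i => ∑ t ∈ range (l i), (L i)⁻¹ • a (N i + t) :=
    ⟨N, l, fun i _ => (L i)⁻¹, fun _ => rfl, fun i => by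
      dsimp only
      rw [← smul_sum, norm_smul, h.norm_sum_range_shift ha,
        Real.norm_of_nonneg (inv_nonneg.2 (hL i).le)]
      exact inv_mul_cancel₀ (hL i).ne',
      fun i => (sum_range_succ l i).ge⟩
  rw [← h _ hb k L, ← sum_range_sum_consecutive]
  congr 1
  refine sum_congr rfl fun i _ => ?_
  rw [smul_sum]
  exact sum_congr rfl fun t _ => by rw [smul_smul, mul_inv_cancel₀ (hL i).ne', one_smul]

theorem norm_sum_range_mul (h : IsBlockIsometric a) (ha : ∀ n, ‖a n‖ = 1) (m n : ℕ) :
    ‖∑ i ∈ range (m * n), a i‖ = ‖∑ i ∈ range m, a i‖ * ‖∑ i ∈ range n, a i‖ := by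
  rcases eq_or_ne n 0 with rfl | hn
  · simp
  have hgroup := h.norm_sum_norm_sum_range_smul ha m (l := fun _ => n) fun _ => hn
  rw [sum_const, card_range, smul_eq_mul, ← smul_sum, norm_smul, norm_norm] at hgroup
  rw [← hgroup, mul_comm]

noncomputable def normSumRangeHom (h : IsBlockIsometric a) (ha : ∀ n, ‖a n‖ = 1) : ℕ →* ℝ where
  toFun n := ‖∑ i ∈ range n, a i‖
  map_one' := by simp [ha]
  map_mul' := h.norm_sum_range_mul ha

theorem isometricC0Basis (h : IsBlockIsometric a) (ha : ∀ n, ‖a n‖ = 1)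
    (hone : ∀ n, n ≠ 0 → ‖∑ i ∈ range n, a i‖ = 1) : IsometricC0Basis a := by
  intro k hk r
  refine le_antisymm ?_ (sup'_le _ _ fun j hj => h.abs_le_norm_sum_smul ha (mem_range.1 hj) r)
  set M := (range k).sup' (nonempty_range_iff.2 hk) fun i => |r i|
  have hM : 0 ≤ M :=
    (abs_nonneg _).trans (le_sup' (fun i => |r i|) (mem_range.2 (Nat.pos_of_ne_zero hk)))
  calc ‖∑ i ∈ range k, r i • a i‖ ≤ ‖∑ i ∈ range k, M • a i‖ :=
        h.norm_sum_smul_le_of_abs_le ha fun i hi =>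
          (le_sup' (fun i => |r i|) (mem_range.2 hi)).trans (le_abs_self M)
    _ = M := by rw [← smul_sum, norm_smul, hone k hk, Real.norm_of_nonneg hM, mul_one]

section Lp

variable {c : ℝ}

theorem norm_sum_natCast_rpow_smul (h : IsBlockIsometric a) (ha : ∀ n, ‖a n‖ = 1)
    (hpow : ∀ n : ℕ, ‖∑ i ∈ range n, a i‖ = (n : ℝ) ^ c) (K : ℕ) {m : ℕ → ℕ}
    (hm : ∀ i, m i ≠ 0) :
    ‖∑ i ∈ range K, (m i : ℝ) ^ c • a i‖ = (∑ i ∈ range K, (m i : ℝ)) ^ c := by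
  simpa only [hpow, Nat.cast_sum] using h.norm_sum_norm_sum_range_smul ha K hm

/-- The identity holds at the points `(m i / N)` with `m i ≥ 1`, which approximate any
nonnegative `x`. -/
theorem norm_sum_rpow_smul (h : IsBlockIsometric a) (ha : ∀ n, ‖a n‖ = 1) (hc : 0 < c)
    (hpow : ∀ n : ℕ, ‖∑ i ∈ range n, a i‖ = (n : ℝ) ^ c) (K : ℕ) {x : ℕ → ℝ}
    (hx : ∀ i, 0 ≤ x i) :
    ‖∑ i ∈ range K, x i ^ c • a i‖ = (∑ i ∈ range K, x i) ^ c := by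
  let m (N i : ℕ) : ℕ := ⌊x i * N⌋₊ + 1
  have hy : Tendsto (fun N i => (m N i : ℝ) / N) atTop (𝓝 x) :=
    tendsto_pi_nhds.2 fun i => tendsto_natCast_floor_mul_add_one_div (hx i)
  have hF : Continuous fun y : ℕ → ℝ => ‖∑ i ∈ range K, y i ^ c • a i‖ := by
    have := Real.continuous_rpow_const hc.le
    fun_prop
  have hG : Continuous fun y : ℕ → ℝ => (∑ i ∈ range K, y i) ^ c := by
    have := Real.continuous_rpow_const hc.le
    fun_prop
  refine tendsto_nhds_unique ((hF.tendsto x).comp hy) (((hG.tendsto x).comp hy).congr' ?_)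
  filter_upwards [eventually_ne_atTop 0] with N hN
  have hN : (0 : ℝ) < N := Nat.cast_pos.2 (Nat.pos_of_ne_zero hN)
  have hNc : 0 < (N : ℝ) ^ c := Real.rpow_pos_of_pos hN c
  calc (∑ i ∈ range K, (m N i : ℝ) / N) ^ c
      = ((N : ℝ) ^ c)⁻¹ * (∑ i ∈ range K, (m N i : ℝ)) ^ c := by
        rw [← sum_div, Real.div_rpow (sum_nonneg fun _ _ => Nat.cast_nonneg _) hN.le,
          div_eq_inv_mul]
    _ = ‖((N : ℝ) ^ c)⁻¹ • ∑ i ∈ range K, (m N i : ℝ) ^ c • a i‖ := by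
        rw [norm_smul, h.norm_sum_natCast_rpow_smul ha hpow K fun i => Nat.succ_ne_zero _,
          Real.norm_of_nonneg (inv_nonneg.2 hNc.le)]
    _ = ‖∑ i ∈ range K, ((m N i : ℝ) / N) ^ c • a i‖ := by
        rw [smul_sum]
        congr 1
        exact sum_congr rfl fun i _ => by
          rw [smul_smul, Real.div_rpow (Nat.cast_nonneg _) hN.le, div_eq_inv_mul]

theorem isometricLpBasis (h : IsBlockIsometric a) (ha : ∀ n, ‖a n‖ = 1) (hc : 0 < c)
    (hpow : ∀ n, n ≠ 0 → ‖∑ i ∈ range n, a i‖ = (n : ℝ) ^ c) : IsometricLpBasis c⁻¹ a := by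
  have hpow' : ∀ n : ℕ, ‖∑ i ∈ range n, a i‖ = (n : ℝ) ^ c := fun n => by
    rcases eq_or_ne n 0 with rfl | hn
    · simp [Real.zero_rpow hc.ne']
    · exact hpow n hn
  intro k r
  have hr : ∀ i, (|r i| ^ c⁻¹) ^ c = |r i| := fun i => by
    rw [← Real.rpow_mul (abs_nonneg _), inv_mul_cancel₀ hc.ne', Real.rpow_one]
  rw [one_div, inv_inv, ← h.norm_sum_abs_smul ha,
    ← h.norm_sum_rpow_smul ha hc hpow' k fun i => Real.rpow_nonneg (abs_nonneg _) _]
  simp only [hr]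

end Lp

end IsBlockIsometric

end BlockIsometric

theorem stmt_1_general {X : Type*} [NormedAddCommGroup X] [NormedSpace ℝ X]
    (a : ℕ → X) (ha : ∀ n, ‖a n‖ = 1)
    (hblock : ∀ b : ℕ → X, IsNormalizedBlockSeq a b →
      ∀ (k : ℕ) (c : ℕ → ℝ),
        ‖∑ m ∈ Finset.range k, c m • b m‖ = ‖∑ m ∈ Finset.range k, c m • a m‖) :
    (∃ p : ℝ, 1 ≤ p ∧ IsometricLpBasis p a) ∨ IsometricC0Basis a := by
  have h : IsBlockIsometric a := hblock
  obtain ⟨c, hc0, hpow⟩ := (h.normSumRangeHom ha).exists_eq_rpow_of_monotone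
    (h.monotone_norm_sum_range ha)
  change ∀ n, n ≠ 0 → ‖∑ i ∈ range n, a i‖ = (n : ℝ) ^ c at hpow
  have hc1 : c ≤ 1 := by
    refine (Real.rpow_le_rpow_left_iff one_lt_two).1 ?_
    rw [Real.rpow_one, ← Nat.cast_ofNat, ← hpow 2 two_ne_zero]
    simpa [ha] using norm_sum_le (range 2) a
  rcases hc0.eq_or_lt with rfl | hc
  · exact .inr (h.isometricC0Basis ha fun n hn => by rw [hpow n hn, Real.rpow_zero])
  · exact .inl ⟨c⁻¹, (one_le_inv₀ hc).2 hc1, h.isometricLpBasis ha hc hpow⟩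

/-- Bohnenblust's characterization: a normalized sequence all of whose normalized block
sequences are isometrically equivalent to it is isometric to the standard basis of some
`ℓ_p` (`1 ≤ p < ∞`) or of `c₀`. -/
theorem stmt_1 {X : Type*} [NormedAddCommGroup X] [NormedSpace ℝ X] [CompleteSpace X]
    (a : ℕ → X) (ha : ∀ n, ‖a n‖ = 1)
    (hblock : ∀ b : ℕ → X, IsNormalizedBlockSeq a b →
      ∀ (k : ℕ) (c : ℕ → ℝ),
        ‖∑ m ∈ Finset.range k, c m • b m‖ = ‖∑ m ∈ Finset.range k, c m • a m‖) :
    (∃ p : ℝ, 1 ≤ p ∧ IsometricLpBasis p a) ∨ IsometricC0Basis a :=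
  stmt_1_general a ha hblock
end

section
/- Let X be a real Banach space and (a_n)_{n<ω} a normalized sequence in X such that every sequence (b_m)_{m<ω} of normalized blocks of (a_n) is isometrically equivalent to (a_n), i.e., for every such (b_m), every k < ω, and every c ∈ ℝ^k, ‖Σ_{m<k} c_m b_m‖ = ‖Σ_{m<k} c_m a_m‖. If the norms of the partial sums are bounded, i.e., sup_{n<ω} ‖a_0 + a_1 + ⋯ + a_{n-1}‖ < ∞, then (a_n) is isometric to the standard basis of c_0; in particular ‖a_0 + ⋯ + a_{n-1}‖ = 1 for every n ≥ 1. -/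
/-!
Block isometry makes `(a n)` spreading and 1-unconditional. For a 1-unconditional sequence,
`‖∑ r i • a i‖` is monotone in each `|r i|`: as a function of one coefficient it is convex and
even, so on `[-|t|, |t|]` it is largest at the endpoints. Hence
`|r j| ≤ ‖∑ r i • a i‖ ≤ (max |r i|) * ‖∑ a i‖`, and the partial sums `s n = ∑_{i<n} a i` have norm
at least `1`. The normalized consecutive blocks of length `n` form a block sequence, which gives
`‖s (K * n)‖ = ‖s n‖ * ‖s K‖` and so `‖s (n ^ j)‖ = ‖s n‖ ^ j`; boundedness then forces `‖s n‖ = 1`.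
-/

open Finset

theorem convexOn_norm_add_smul {E : Type*} [NormedAddCommGroup E] [NormedSpace ℝ E] (x z : E) :
    ConvexOn ℝ Set.univ fun u : ℝ => ‖x + u • z‖ := by
  refine ⟨convex_univ, fun u _ v _ α β hα hβ hαβ => ?_⟩
  calc ‖x + (α • u + β • v) • z‖ = ‖α • (x + u • z) + β • (x + v • z)‖ := by
        congr 1; linear_combination (norm := module) -(hαβ • x)
    _ ≤ α * ‖x + u • z‖ + β * ‖x + v • z‖ := by
        simpa only [norm_smul, Real.norm_of_nonneg hα, Real.norm_of_nonneg hβ] using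
          norm_add_le (α • (x + u • z)) (β • (x + v • z))

theorem norm_add_smul_le_of_abs_le_s3 {E : Type*} [NormedAddCommGroup E] [NormedSpace ℝ E]
    {x z : E} {s t : ℝ} (hst : |s| ≤ |t|) (h : ‖x - t • z‖ = ‖x + t • z‖) :
    ‖x + s • z‖ ≤ ‖x + t • z‖ := by
  have hsym : ‖x + (-t) • z‖ = ‖x + t • z‖ := by rwa [neg_smul, ← sub_eq_add_neg]
  have hmax := (convexOn_norm_add_smul x z).le_max_of_mem_Icc (Set.mem_univ (-|t|))
    (Set.mem_univ |t|) (Set.mem_Icc.2 (abs_le.1 hst))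
  rcases abs_choice t with ht | ht <;> simpa only [ht, neg_neg, hsym, max_self] using hmax

def IsOneUnconditional {E : Type*} [NormedAddCommGroup E] [NormedSpace ℝ E] (a : ℕ → E) :
    Prop :=
  ∀ (k : ℕ) (c ε : ℕ → ℝ), (∀ i, |ε i| = 1) →
    ‖∑ i ∈ range k, (ε i * c i) • a i‖ = ‖∑ i ∈ range k, c i • a i‖

namespace IsOneUnconditional

variable {E : Type*} [NormedAddCommGroup E] [NormedSpace ℝ E] {a : ℕ → E}

theorem norm_sum_update_le (hu : IsOneUnconditional a) {k j : ℕ} (hj : j < k) (c : ℕ → ℝ)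
    {s : ℝ} (hs : |s| ≤ |c j|) :
    ‖∑ i ∈ range k, Function.update c j s i • a i‖ ≤ ‖∑ i ∈ range k, c i • a i‖ := by
  set x := ∑ i ∈ range k \ {j}, c i • a i
  have hsplit : ∀ u, ∑ i ∈ range k, Function.update c j u i • a i = x + u • a j := fun u => by
    simp only [Function.apply_update (fun i r => r • a i)]
    rw [sum_update_of_mem (mem_range.2 hj), add_comm]
  have hfull : ∑ i ∈ range k, c i • a i = x + c j • a j := by
    rw [← hsplit, Function.update_eq_self]
  have hflip :
      ∑ i ∈ range k, (Function.update (1 : ℕ → ℝ) j (-1) i * c i) • a i = x - c j • a j := by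
    rw [sub_eq_add_neg, ← neg_smul, ← hsplit]
    refine sum_congr rfl fun i _ => ?_
    rcases eq_or_ne i j with rfl | hi <;> simp [*]
  have hsign : ∀ i, |Function.update (1 : ℕ → ℝ) j (-1) i| = 1 := fun i => by
    rcases eq_or_ne i j with rfl | hi <;> simp [*]
  rw [hsplit, hfull]
  refine norm_add_smul_le_of_abs_le_s3 hs ?_
  rw [← hflip, ← hfull, hu k c _ hsign]

theorem norm_sum_le_of_abs_le (hu : IsOneUnconditional a) {k : ℕ} {r t : ℕ → ℝ}
    (hrt : ∀ i < k, |r i| ≤ |t i|) :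
    ‖∑ i ∈ range k, r i • a i‖ ≤ ‖∑ i ∈ range k, t i • a i‖ := by
  let hybrid (m : ℕ) (i : ℕ) : ℝ := if i < m then r i else t i
  have hstep : ∀ m,
      ‖∑ i ∈ range k, hybrid (m + 1) i • a i‖ ≤ ‖∑ i ∈ range k, hybrid m i • a i‖ := by
    intro m
    by_cases hm : m < k
    · have hupd : hybrid (m + 1) = Function.update (hybrid m) m (r m) := by
        funext i
        rcases lt_trichotomy i m with hi | rfl | hi
        · simp [hybrid, hi, hi.trans (Nat.lt_succ_self m), hi.ne]
        · simp [hybrid]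
        · simp [hybrid, hi.ne', hi.not_gt, Nat.succ_le_of_lt hi |>.not_gt]
      rw [hupd]
      exact hu.norm_sum_update_le hm _ (by simpa [hybrid] using hrt m hm)
    · refine (congrArg norm (sum_congr rfl fun i hi => ?_)).le
      have : i < m := (mem_range.1 hi).trans_le (not_lt.1 hm)
      simp [hybrid, this, this.trans (Nat.lt_succ_self m)]
  have hchain : ∀ m, ‖∑ i ∈ range k, hybrid m i • a i‖ ≤ ‖∑ i ∈ range k, t i • a i‖ := by
    intro m
    induction m with
    | zero => simp [hybrid]
    | succ m ih => exact (hstep m).trans ih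
  calc ‖∑ i ∈ range k, r i • a i‖ = ‖∑ i ∈ range k, hybrid k i • a i‖ := by
        congr 1
        exact sum_congr rfl fun i hi => by simp [hybrid, mem_range.1 hi]
    _ ≤ _ := hchain k

theorem norm_smul_le_norm_sum (hu : IsOneUnconditional a) {k j : ℕ} (hj : j < k)
    (r : ℕ → ℝ) : ‖r j • a j‖ ≤ ‖∑ i ∈ range k, r i • a i‖ := by
  have h := hu.norm_sum_le_of_abs_le (k := k) (r := fun i => if i = j then r j else 0) (t := r)
    fun i _ => by split_ifs with hi <;> simp [hi]
  simpa [ite_smul, hj] using h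

theorem one_le_norm_sum (hu : IsOneUnconditional a) (ha : ∀ n, ‖a n‖ = 1) {n : ℕ}
    (hn : 1 ≤ n) : 1 ≤ ‖∑ i ∈ range n, a i‖ := by
  simpa [ha] using hu.norm_smul_le_norm_sum hn fun _ => 1

theorem isometricC0Basis (hu : IsOneUnconditional a) (ha : ∀ n, ‖a n‖ = 1)
    (hs : ∀ n, 1 ≤ n → ‖∑ i ∈ range n, a i‖ = 1) : IsometricC0Basis a := by
  intro k hk r
  set M := (range k).sup' (nonempty_range_iff.mpr hk) fun i => |r i|
  have hrM : ∀ i < k, |r i| ≤ M := fun i hi => le_sup' (fun i => |r i|) (mem_range.2 hi)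
  have hM : 0 ≤ M := (abs_nonneg _).trans (hrM 0 (Nat.pos_of_ne_zero hk))
  refine le_antisymm ?_ (sup'_le _ _ fun j hj => ?_)
  · calc ‖∑ i ∈ range k, r i • a i‖ ≤ ‖∑ i ∈ range k, M • a i‖ :=
          hu.norm_sum_le_of_abs_le fun i hi => (hrM i hi).trans (le_abs_self M)
      _ = M := by
          rw [← smul_sum, norm_smul, hs k (Nat.one_le_iff_ne_zero.2 hk), Real.norm_of_nonneg hM,
            mul_one]
  · simpa [norm_smul, ha] using hu.norm_smul_le_norm_sum (mem_range.1 hj) r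

end IsOneUnconditional

theorem Finset.sum_range_mul_eq_sum_sum {M : Type*} [AddCommMonoid M] (f : ℕ → M) (K n : ℕ) :
    ∑ i ∈ range (K * n), f i = ∑ m ∈ range K, ∑ i ∈ range n, f (m * n + i) := by
  induction K with
  | zero => simp
  | succ K ih => rw [sum_range_succ, ← ih, Nat.succ_mul, sum_range_add]

def BlockIsometric {X : Type*} [NormedAddCommGroup X] [NormedSpace ℝ X] (a : ℕ → X) : Prop :=
  ∀ b : ℕ → X, IsNormalizedBlockSeq a b → ∀ (k : ℕ) (c : ℕ → ℝ),
    ‖∑ m ∈ range k, c m • b m‖ = ‖∑ m ∈ range k, c m • a m‖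

namespace BlockIsometric

variable {X : Type*} [NormedAddCommGroup X] [NormedSpace ℝ X] {a : ℕ → X}

theorem norm_sum_smul_signed_subseq (h : BlockIsometric a) (ha : ∀ n, ‖a n‖ = 1)
    {j : ℕ → ℕ} (hj : StrictMono j) {ε : ℕ → ℝ} (hε : ∀ m, |ε m| = 1) (k : ℕ) (c : ℕ → ℝ) :
    ‖∑ m ∈ range k, c m • ε m • a (j m)‖ = ‖∑ m ∈ range k, c m • a m‖ :=
  h _ ⟨j, fun _ => 1, fun m _ => ε m, fun m => by simp,
    fun m => by rw [norm_smul, ha, Real.norm_eq_abs, hε, mul_one],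
    fun m => hj (Nat.lt_succ_self m)⟩ k c

theorem isOneUnconditional (h : BlockIsometric a) (ha : ∀ n, ‖a n‖ = 1) :
    IsOneUnconditional a := fun k c ε hε => by
  simpa [smul_smul, mul_comm] using h.norm_sum_smul_signed_subseq ha strictMono_id hε k c

theorem norm_sum_add (h : BlockIsometric a) (ha : ∀ n, ‖a n‖ = 1) (p n : ℕ) :
    ‖∑ i ∈ range n, a (p + i)‖ = ‖∑ i ∈ range n, a i‖ := by
  simpa using h.norm_sum_smul_signed_subseq ha (strictMono_id.const_add p)
    (ε := fun _ => 1) (by simp) n fun _ => 1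

theorem norm_sum_mul (h : BlockIsometric a) (ha : ∀ n, ‖a n‖ = 1) {n : ℕ}
    (hn : 0 < ‖∑ i ∈ range n, a i‖) (K : ℕ) :
    ‖∑ i ∈ range (K * n), a i‖ = ‖∑ i ∈ range n, a i‖ * ‖∑ i ∈ range K, a i‖ := by
  set T := ‖∑ i ∈ range n, a i‖
  have hblocks := h (fun m => T⁻¹ • ∑ i ∈ range n, a (m * n + i))
    ⟨fun m => m * n, fun _ => n, fun _ _ => T⁻¹, fun m => smul_sum,
      fun m => by rw [norm_smul, h.norm_sum_add ha, norm_inv, Real.norm_of_nonneg hn.le,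
        inv_mul_cancel₀ hn.ne'],
      fun m => (Nat.succ_mul m n).ge⟩ K fun _ => T
  calc ‖∑ i ∈ range (K * n), a i‖
      = ‖∑ m ∈ range K, T • T⁻¹ • ∑ i ∈ range n, a (m * n + i)‖ := by
        simp only [sum_range_mul_eq_sum_sum, smul_smul, mul_inv_cancel₀ hn.ne', one_smul]
    _ = ‖∑ m ∈ range K, T • a m‖ := hblocks
    _ = T * ‖∑ i ∈ range K, a i‖ := by rw [← smul_sum, norm_smul, Real.norm_of_nonneg hn.le]

theorem norm_sum_pow (h : BlockIsometric a) (ha : ∀ n, ‖a n‖ = 1) {n : ℕ}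
    (hn : 0 < ‖∑ i ∈ range n, a i‖) (j : ℕ) :
    ‖∑ i ∈ range (n ^ j), a i‖ = ‖∑ i ∈ range n, a i‖ ^ j := by
  induction j with
  | zero => simp [ha]
  | succ j ih => rw [pow_succ, h.norm_sum_mul ha hn, ih, pow_succ, mul_comm]

theorem norm_sum_eq_one (h : BlockIsometric a) (ha : ∀ n, ‖a n‖ = 1)
    (hbd : BddAbove (Set.range fun n : ℕ => ‖∑ i ∈ range n, a i‖)) {n : ℕ} (hn : 1 ≤ n) :
    ‖∑ i ∈ range n, a i‖ = 1 := by
  have hge := (h.isOneUnconditional ha).one_le_norm_sum ha hn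
  refine le_antisymm (not_lt.1 fun hgt => ?_) hge
  obtain ⟨D, hD⟩ := hbd
  obtain ⟨j, hj⟩ := pow_unbounded_of_one_lt D hgt
  have hbound := hD (Set.mem_range_self (n ^ j))
  rw [h.norm_sum_pow ha (zero_lt_one.trans_le hge)] at hbound
  exact hj.not_ge hbound

end BlockIsometric

theorem stmt_3_general {X : Type*} [NormedAddCommGroup X] [NormedSpace ℝ X]
    (a : ℕ → X) (ha : ∀ n, ‖a n‖ = 1)
    (hblock : ∀ b : ℕ → X, IsNormalizedBlockSeq a b →
      ∀ (k : ℕ) (c : ℕ → ℝ),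
        ‖∑ m ∈ Finset.range k, c m • b m‖ = ‖∑ m ∈ Finset.range k, c m • a m‖)
    (hbd : BddAbove (Set.range fun n : ℕ => ‖∑ i ∈ Finset.range n, a i‖)) :
    IsometricC0Basis a ∧ ∀ n : ℕ, 1 ≤ n → ‖∑ i ∈ Finset.range n, a i‖ = 1 := by
  have hs : ∀ n : ℕ, 1 ≤ n → ‖∑ i ∈ range n, a i‖ = 1 := fun _ =>
    BlockIsometric.norm_sum_eq_one hblock ha hbd
  exact ⟨(BlockIsometric.isOneUnconditional hblock ha).isometricC0Basis ha hs, hs⟩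

/-- If the norms of the partial sums are bounded, the sequence is isometric to the standard
basis of `c₀`; in particular all partial sums have norm 1. -/
theorem stmt_3 {X : Type*} [NormedAddCommGroup X] [NormedSpace ℝ X] [CompleteSpace X]
    (a : ℕ → X) (ha : ∀ n, ‖a n‖ = 1)
    (hblock : ∀ b : ℕ → X, IsNormalizedBlockSeq a b →
      ∀ (k : ℕ) (c : ℕ → ℝ),
        ‖∑ m ∈ Finset.range k, c m • b m‖ = ‖∑ m ∈ Finset.range k, c m • a m‖)
    (hbd : BddAbove (Set.range fun n : ℕ => ‖∑ i ∈ Finset.range n, a i‖)) :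
    IsometricC0Basis a ∧ ∀ n : ℕ, 1 ≤ n → ‖∑ i ∈ Finset.range n, a i‖ = 1 :=
  stmt_3_general a ha hblock hbd
end
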